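/- Let q be a prime with q ≡ 5 (mod 8) and let n ≥ 1 be an integer. Then the 2-adic valuation of the order of GL(Fin n, ZMod q) is exactly v_2(|GL(n, 𝔽_q)|) = 2n + ∑_{i≥1} ⌊n/2^i⌋. -/

import Mathlib

open Matrix Finset Nat

/-!
Write `|GL(n, 𝔽_q)| = ∏_{i<n} q^i (q^(n-i) - 1)`. For `4 ∣ q - 1` the lifting-the-exponent
lemma gives `v₂(q^j - 1) = v₂(q - 1) + v₂(j)`, so summing over `j = n - i` yields
`v₂|GL(n, 𝔽_q)| = n v₂(q - 1) + v₂(n!)`. For `q ≡ 5 (mod 8)` we have `v₂(q - 1) = 2`,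
and Legendre's formula turns `v₂(n!)` into `∑ ⌊n/2^i⌋`.
-/

lemma padicValNat_finset_prod {p : ℕ} [hp : Fact p.Prime] {ι : Type*} {s : Finset ι}
    {f : ι → ℕ} (hf : ∀ i ∈ s, f i ≠ 0) :
    padicValNat p (∏ i ∈ s, f i) = ∑ i ∈ s, padicValNat p (f i) := by
  simp only [← factorization_def _ hp.out, factorization_prod hf, Finsupp.coe_finsetSum,
    Finset.sum_apply]

lemma padicValNat_factorial_eq_sum_range (p n : ℕ) [Fact p.Prime] :
    padicValNat p n ! = ∑ i ∈ range (n + 1), n / p ^ (i + 1) := by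
  rw [padicValNat_factorial (b := n + 2) (by have := Nat.log_le_self p n; omega),
    sum_Ico_eq_sum_range]
  simp [add_comm]

lemma padicValNat_factorial_eq_sum_sub (p n : ℕ) [Fact p.Prime] :
    padicValNat p n ! = ∑ i ∈ range n, padicValNat p (n - i) := by
  rw [← prod_range_add_one_eq_factorial, padicValNat_finset_prod fun i _ ↦ succ_ne_zero i,
    ← sum_range_reflect]
  refine sum_congr rfl fun i hi ↦ ?_
  rw [mem_range] at hi
  congr 1
  omega

lemma padicValNat_two_pow_sub_pow {x y n : ℕ} (hyx : y < x) (hxy : 4 ∣ x - y) (hx : ¬2 ∣ x)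
    (hn : n ≠ 0) :
    padicValNat 2 (x ^ n - y ^ n) = padicValNat 2 (x - y) + padicValNat 2 n := by
  have hpow : y ^ n < x ^ n := Nat.pow_lt_pow_left hyx hn
  rw [← Nat.cast_inj (R := ℕ∞), Nat.cast_add, padicValNat_eq_emultiplicity (by omega),
    padicValNat_eq_emultiplicity (by omega), padicValNat_eq_emultiplicity hn,
    ← Int.natCast_emultiplicity, ← Int.natCast_emultiplicity, ← Int.natCast_emultiplicity,
    Nat.cast_sub hyx.le, Nat.cast_sub hpow.le, Nat.cast_pow, Nat.cast_pow]
  refine Int.two_pow_sub_pow' n ?_ (by exact_mod_cast hx)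
  rw [← Nat.cast_sub hyx.le]
  exact_mod_cast hxy

lemma padicValNat_two_pow_sub_pow_of_lt {q n i : ℕ} (hq : 1 < q) (hq4 : 4 ∣ q - 1)
    (hi : i < n) :
    padicValNat 2 (q ^ n - q ^ i) = padicValNat 2 (q - 1) + padicValNat 2 (n - i) := by
  have hq2 : ¬2 ∣ q := by omega
  have hsplit : q ^ n - q ^ i = q ^ i * (q ^ (n - i) - 1 ^ (n - i)) := by
    rw [one_pow, Nat.mul_sub_one, ← pow_add, Nat.add_sub_cancel' hi.le]
  have hlt : 1 < q ^ (n - i) := Nat.one_lt_pow (by omega) hq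
  rw [hsplit, padicValNat.mul (by positivity) (Nat.sub_ne_zero_of_lt (by rwa [one_pow])),
    padicValNat.eq_zero_of_not_dvd fun h ↦ hq2 (Nat.prime_two.dvd_of_dvd_pow h), zero_add,
    padicValNat_two_pow_sub_pow hq hq4 hq2 (by omega)]

theorem padicValNat_two_card_GL_of_four_dvd {F : Type*} [Field F] [Fintype F] (n : ℕ)
    (hF : 4 ∣ Fintype.card F - 1) :
    padicValNat 2 (Nat.card (GL (Fin n) F)) =
      n * padicValNat 2 (Fintype.card F - 1) + padicValNat 2 n ! := by
  have hq : 1 < Fintype.card F := Fintype.one_lt_card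
  have hpos : ∀ i ∈ range n, Fintype.card F ^ n - Fintype.card F ^ i ≠ 0 := fun i hi ↦
    Nat.sub_ne_zero_of_lt (Nat.pow_lt_pow_right hq (mem_range.mp hi))
  rw [card_GL_field,
    Fin.prod_univ_eq_prod_range (fun i ↦ Fintype.card F ^ n - Fintype.card F ^ i),
    padicValNat_finset_prod hpos, padicValNat_factorial_eq_sum_sub,
    sum_congr rfl fun i hi ↦ padicValNat_two_pow_sub_pow_of_lt hq hF (mem_range.mp hi),
    sum_add_distrib, sum_const, card_range, smul_eq_mul]

theorem padicValNat_two_card_GL_of_five_mod_eight_general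
    (q : ℕ) (hq : q.Prime) (hq8 : q % 8 = 5) (n : ℕ) :
    padicValNat 2 (Nat.card (GL (Fin n) (ZMod q))) =
      2 * n + ∑ i ∈ Finset.range (n + 1), n / 2 ^ (i + 1) := by
  have : Fact q.Prime := ⟨hq⟩
  have hval : padicValNat 2 (q - 1) = 2 := by
    obtain ⟨k, hk⟩ : ∃ k, q - 1 = 2 ^ 2 * (2 * k + 1) := ⟨q / 8, by omega⟩
    rw [hk, padicValNat.mul (by positivity) (by omega), padicValNat.prime_pow,
      padicValNat.eq_zero_of_not_dvd (by omega)]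
  rw [padicValNat_two_card_GL_of_four_dvd n (by rw [ZMod.card]; omega), ZMod.card, hval,
    mul_comm, padicValNat_factorial_eq_sum_range]

/-- Remark 3.5: for a prime `q ≡ 5 (mod 8)`,
`v_2(|GL(n, 𝔽_q)|) = 2n + ∑_{i≥1} ⌊n/2^i⌋`. -/
theorem padicValNat_two_card_GL_of_five_mod_eight
    (q : ℕ) (hq : q.Prime) (hq8 : q % 8 = 5) (n : ℕ) (hn : 1 ≤ n) :
    padicValNat 2 (Nat.card (GL (Fin n) (ZMod q))) =
      2 * n + ∑ i ∈ Finset.range (n + 1), n / 2 ^ (i + 1) :=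
  padicValNat_two_card_GL_of_five_mod_eight_general q hq hq8 n
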